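/- For a quantum state ρ (positive semidefinite operator with trace 1) and a projector Π on a Hilbert space, the trace norm distance satisfies ‖ρ − ΠρΠ‖₁ ≤ 2·√(1 − tr(ΠρΠ)). -/

import Mathlib

open scoped ComplexOrder

/-- The positive semidefinite square root of a positive semidefinite matrix
(the definition Mathlib had in December 2024, since removed). -/
noncomputable def Matrix.PosSemidef.sqrt {n : Type*} [Fintype n] [DecidableEq n]
    {A : Matrix n n ℂ} (hA : A.PosSemidef) : Matrix n n ℂ :=
  hA.1.eigenvectorUnitary.1 * Matrix.diagonal ((↑) ∘ (√·) ∘ hA.1.eigenvalues) *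
  (star hA.1.eigenvectorUnitary : Matrix n n ℂ)

/-- The trace norm of a matrix: `‖A‖₁ = tr √(AᴴA)`. -/
noncomputable def traceNorm {n : Type*} [Fintype n] [DecidableEq n]
    (A : Matrix n n ℂ) : ℝ :=
  ((Matrix.posSemidef_conjTranspose_mul_self A).sqrt.trace).re

/-!
Write `ρ = S²` with `S = √ρ`, put `Q = 1 - P` and `p = tr (Pρ) = tr (PρP)`. Then
`ρ - PρP = (QS)S + (PS)(SQ)`, and Hölder's inequality `‖XY‖₁ ≤ ‖X‖₂ ‖Y‖₂` bounds the two terms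
by `√(1 - p) · 1` and `√p · √(1 - p)`, since `‖QS‖₂² = ‖SQ‖₂² = tr (Qρ) = 1 - p`.
Both the triangle inequality for `‖·‖₁` and Hölder's inequality come from the polar decomposition
`A = W |A|` with `W` a contraction, through the duality `Re tr (Bᴴ A) ≤ ‖A‖₁` for contractions `B`.
-/

open Matrix
open scoped MatrixOrder

namespace Matrix

variable {n : Type*} [Fintype n] {𝕜 : Type*} [RCLike 𝕜]

lemma re_trace_conjTranspose_mul_self_nonneg (X : Matrix n n 𝕜) :
    0 ≤ RCLike.re (Xᴴ * X).trace :=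
  (RCLike.nonneg_iff.mp (posSemidef_conjTranspose_mul_self X).trace_nonneg).1

lemma re_trace_conjTranspose_mul_le [DecidableEq n] (X Y : Matrix n n 𝕜) :
    RCLike.re (Xᴴ * Y).trace ≤ √(RCLike.re (Xᴴ * X).trace) * √(RCLike.re (Yᴴ * Y).trace) := by
  let := toMatrixSeminormedAddCommGroup (1 : Matrix n n 𝕜) PosSemidef.one
  let := toMatrixInnerProductSpace (1 : Matrix n n 𝕜) PosSemidef.one
  have h := re_inner_le_norm (𝕜 := 𝕜) Yᴴ Xᴴ
  rw [norm_eq_sqrt_re_inner (𝕜 := 𝕜) Yᴴ, norm_eq_sqrt_re_inner (𝕜 := 𝕜) Xᴴ] at h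
  change RCLike.re (Xᴴ * 1 * Yᴴᴴ).trace ≤ √(RCLike.re (Yᴴ * 1 * Yᴴᴴ).trace) *
    √(RCLike.re (Xᴴ * 1 * Xᴴᴴ).trace) at h
  simp only [conjTranspose_conjTranspose, Matrix.mul_one] at h
  exact h.trans_eq (mul_comm _ _)

lemma re_trace_conjTranspose_mul_self_le_of_contraction [DecidableEq n] {C : Matrix n n 𝕜}
    (hC : Cᴴ * C ≤ 1) (X : Matrix n n 𝕜) :
    RCLike.re ((C * X)ᴴ * (C * X)).trace ≤ RCLike.re (Xᴴ * X).trace := by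
  have h := (RCLike.nonneg_iff.mp (hC.conjTranspose_mul_mul_same X).trace_nonneg).1
  rw [Matrix.mul_sub, Matrix.sub_mul, Matrix.mul_one, trace_sub, map_sub, sub_nonneg] at h
  simpa only [conjTranspose_mul, Matrix.mul_assoc] using h

lemma trace_conjTranspose_mul_self_mul_left {P : Matrix n n 𝕜} (hP : IsStarProjection P)
    (X : Matrix n n 𝕜) : ((P * X)ᴴ * (P * X)).trace = (P * (X * Xᴴ)).trace := by
  have hPH : Pᴴ = P := hP.isSelfAdjoint
  rw [conjTranspose_mul, hPH, Matrix.mul_assoc, ← Matrix.mul_assoc P,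
    hP.isIdempotentElem.eq, trace_mul_comm, Matrix.mul_assoc]

lemma trace_conjTranspose_mul_self_mul_right {P : Matrix n n 𝕜} (hP : IsStarProjection P)
    (X : Matrix n n 𝕜) : ((X * P)ᴴ * (X * P)).trace = (P * (Xᴴ * X)).trace := by
  have hPH : Pᴴ = P := hP.isSelfAdjoint
  rw [conjTranspose_mul, hPH, trace_mul_comm, Matrix.mul_assoc, ← Matrix.mul_assoc P P,
    hP.isIdempotentElem.eq, trace_mul_comm, Matrix.mul_assoc]

theorem exists_polar_decomposition [DecidableEq n] (A : Matrix n n 𝕜) :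
    ∃ W : Matrix n n 𝕜, Wᴴ * W ≤ 1 ∧ W * CFC.abs A = A ∧ Wᴴ * A = CFC.abs A := by
  set T := CFC.abs A
  have hcont (f : ℝ → ℝ) : ContinuousOn f (spectrum ℝ T) := T.finite_real_spectrum.continuousOn f
  have hmul (f g : ℝ → ℝ) : cfc f T * cfc g T = cfc (fun x => f x * g x) T :=
    (cfc_mul f g T (hcont f) (hcont g)).symm
  have hid : cfc (fun x : ℝ => x) T = T := cfc_id' ℝ T (CFC.abs_nonneg A).isSelfAdjoint
  have hAA : Aᴴ * A = cfc (fun x : ℝ => x * x) T := by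
    rw [← hmul, hid, CFC.abs_mul_abs, star_eq_conjTranspose]
  -- `x ↦ x⁻¹` (with `0⁻¹ = 0`) is continuous on the finite spectrum, so `R` is the
  -- Moore–Penrose inverse of `T`.
  set R := cfc (fun x : ℝ => x⁻¹) T
  have hR : Rᴴ = R := (cfc_predicate _ T : IsSelfAdjoint R)
  refine ⟨A * R, ?_, ?_, ?_⟩
  · rw [conjTranspose_mul, hR, Matrix.mul_assoc, ← Matrix.mul_assoc Aᴴ, hAA, hmul, hmul]
    exact cfc_le_one _ _ fun x _ => by by_cases hx : x = 0 <;> simp [hx]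
  · set K := cfc (fun x : ℝ => 1 - x⁻¹ * x) T with hKdef
    have hK : A * K = 0 := by
      have hKK : Kᴴ = K := (cfc_predicate _ T : IsSelfAdjoint K)
      rw [← conjTranspose_mul_self_eq_zero, conjTranspose_mul, hKK, Matrix.mul_assoc,
        ← Matrix.mul_assoc Aᴴ, hAA, hmul, hmul, ← cfc_zero ℝ T]
      exact cfc_congr fun x _ => by by_cases hx : x = 0 <;> simp [hx]
    have hRT : R * T = 1 - K := by
      rw [hKdef, cfc_sub _ _ T (hcont _) (hcont _), cfc_const_one ℝ T, sub_sub_cancel]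
      nth_rw 1 [← hid]
      exact hmul _ _
    rw [Matrix.mul_assoc, hRT, Matrix.mul_sub, hK, Matrix.mul_one, sub_zero]
  · rw [conjTranspose_mul, hR, Matrix.mul_assoc, hAA, hmul]
    refine (cfc_congr fun x _ => ?_).trans hid
    by_cases hx : x = 0 <;> simp [hx]

lemma PosSemidef.sqrt_eq_cfcSqrt [DecidableEq n] {A : Matrix n n ℂ} (hA : A.PosSemidef) :
    hA.sqrt = CFC.sqrt A := by
  rw [CFC.sqrt_eq_real_sqrt A hA.nonneg, cfcₙ_eq_cfc, hA.1.cfc_eq]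
  rfl

end Matrix

section TraceNorm

variable {n : Type*} [Fintype n] [DecidableEq n]

lemma traceNorm_eq_re_trace_abs (A : Matrix n n ℂ) : traceNorm A = (CFC.abs A).trace.re := by
  rw [traceNorm, PosSemidef.sqrt_eq_cfcSqrt]
  rfl

lemma re_trace_conjTranspose_mul_le_traceNorm {B : Matrix n n ℂ} (hB : Bᴴ * B ≤ 1)
    (A : Matrix n n ℂ) : (Bᴴ * A).trace.re ≤ traceNorm A := by
  obtain ⟨W, hW, hWA, -⟩ := exists_polar_decomposition A
  set S := CFC.sqrt (CFC.abs A)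
  have hS : Sᴴ = S := (CFC.sqrt_nonneg _).isSelfAdjoint
  have hSS : S * S = CFC.abs A := CFC.sqrt_mul_sqrt_self _ (CFC.abs_nonneg A)
  have htrace : (Bᴴ * A).trace = ((B * S)ᴴ * (W * S)).trace := by
    rw [← hWA, ← hSS, conjTranspose_mul, hS]
    simp only [← Matrix.mul_assoc]
    rw [trace_mul_comm]
    simp only [Matrix.mul_assoc]
  have hS0 : 0 ≤ (Sᴴ * S).trace.re := re_trace_conjTranspose_mul_self_nonneg S
  calc (Bᴴ * A).trace.re = ((B * S)ᴴ * (W * S)).trace.re := by rw [htrace]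
    _ ≤ √((B * S)ᴴ * (B * S)).trace.re * √((W * S)ᴴ * (W * S)).trace.re :=
      re_trace_conjTranspose_mul_le (B * S) (W * S)
    _ ≤ √(Sᴴ * S).trace.re * √(Sᴴ * S).trace.re := by
      gcongr √?_ * √?_
      · exact re_trace_conjTranspose_mul_self_le_of_contraction hB S
      · exact re_trace_conjTranspose_mul_self_le_of_contraction hW S
    _ = traceNorm A := by
      rw [Real.mul_self_sqrt hS0, hS, hSS, traceNorm_eq_re_trace_abs]

theorem traceNorm_add_le (A B : Matrix n n ℂ) :
    traceNorm (A + B) ≤ traceNorm A + traceNorm B := by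
  obtain ⟨W, hW, -, hWA⟩ := exists_polar_decomposition (A + B)
  calc traceNorm (A + B) = (Wᴴ * A).trace.re + (Wᴴ * B).trace.re := by
        rw [traceNorm_eq_re_trace_abs, ← hWA, Matrix.mul_add, trace_add, Complex.add_re]
    _ ≤ traceNorm A + traceNorm B :=
      add_le_add (re_trace_conjTranspose_mul_le_traceNorm hW A)
        (re_trace_conjTranspose_mul_le_traceNorm hW B)

theorem traceNorm_mul_le (X Y : Matrix n n ℂ) :
    traceNorm (X * Y) ≤ √(Xᴴ * X).trace.re * √(Yᴴ * Y).trace.re := by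
  obtain ⟨W, hW, -, hWA⟩ := exists_polar_decomposition (X * Y)
  have htrace : (Wᴴ * (X * Y)).trace = ((W * Yᴴ)ᴴ * X).trace := by
    rw [conjTranspose_mul, conjTranspose_conjTranspose, ← Matrix.mul_assoc, trace_mul_comm,
      Matrix.mul_assoc]
  have hY : ((W * Yᴴ)ᴴ * (W * Yᴴ)).trace.re ≤ (Yᴴ * Y).trace.re := by
    refine (re_trace_conjTranspose_mul_self_le_of_contraction hW Yᴴ).trans_eq ?_
    rw [conjTranspose_conjTranspose, trace_mul_comm]
    rfl
  calc traceNorm (X * Y) = ((W * Yᴴ)ᴴ * X).trace.re := by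
        rw [traceNorm_eq_re_trace_abs, ← hWA, htrace]
    _ ≤ √((W * Yᴴ)ᴴ * (W * Yᴴ)).trace.re * √(Xᴴ * X).trace.re :=
      re_trace_conjTranspose_mul_le (W * Yᴴ) X
    _ ≤ √(Yᴴ * Y).trace.re * √(Xᴴ * X).trace.re := by gcongr
    _ = √(Xᴴ * X).trace.re * √(Yᴴ * Y).trace.re := mul_comm _ _

end TraceNorm

/-- **Gentle measurement lemma.** For a quantum state `ρ` (positive semidefinite
with trace 1) and a projector `P`, one has `‖ρ − PρP‖₁ ≤ 2√(1 − tr(PρP))`. -/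
theorem gentle_measurement {n : Type*} [Fintype n] [DecidableEq n]
    (ρ P : Matrix n n ℂ)
    (hρ : ρ.PosSemidef) (hρtr : ρ.trace = 1)
    (hPherm : P.IsHermitian) (hPproj : P * P = P) :
    traceNorm (ρ - P * ρ * P) ≤ 2 * Real.sqrt (1 - ((P * ρ * P).trace).re) := by
  have hP : IsStarProjection P := ⟨hPproj, hPherm⟩
  set S := CFC.sqrt ρ
  have hS : Sᴴ = S := (CFC.sqrt_nonneg ρ).isSelfAdjoint
  have hSS : S * S = ρ := CFC.sqrt_mul_sqrt_self ρ hρ.nonneg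
  have hsplit : ρ - P * ρ * P = (1 - P) * S * S + P * S * (S * (1 - P)) := by
    rw [← hSS]; noncomm_ring
  have hPρP : (P * ρ * P).trace = (P * ρ).trace := by
    rw [trace_mul_comm, ← Matrix.mul_assoc, hPproj]
  rw [hPρP]
  set p := (P * ρ).trace.re
  have hQρ : ((1 - P) * ρ).trace.re = 1 - p := by
    rw [Matrix.sub_mul, Matrix.one_mul, trace_sub, hρtr, Complex.sub_re, Complex.one_re]
  have hPS : ((P * S)ᴴ * (P * S)).trace.re = p := by
    rw [trace_conjTranspose_mul_self_mul_left hP, hS, hSS]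
  have hQS : (((1 - P) * S)ᴴ * ((1 - P) * S)).trace.re = 1 - p := by
    rw [trace_conjTranspose_mul_self_mul_left hP.one_sub, hS, hSS, hQρ]
  have hSQ : ((S * (1 - P))ᴴ * (S * (1 - P))).trace.re = 1 - p := by
    rw [trace_conjTranspose_mul_self_mul_right hP.one_sub, hS, hSS, hQρ]
  have hp : √p ≤ 1 := by
    rw [Real.sqrt_le_one, ← sub_nonneg, ← hQS]
    exact re_trace_conjTranspose_mul_self_nonneg ((1 - P) * S)
  have hQρ_le := traceNorm_mul_le ((1 - P) * S) S
  have hPρQ_le := traceNorm_mul_le (P * S) (S * (1 - P))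
  rw [hQS, hS, hSS, hρtr, Complex.one_re, Real.sqrt_one, mul_one] at hQρ_le
  rw [hPS, hSQ] at hPρQ_le
  calc traceNorm (ρ - P * ρ * P)
      ≤ traceNorm ((1 - P) * S * S) + traceNorm (P * S * (S * (1 - P))) :=
        hsplit ▸ traceNorm_add_le _ _
    _ ≤ 2 * √(1 - p) := by nlinarith [Real.sqrt_nonneg (1 - p)]
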